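/- arXiv:2303.14000 — 2 statements merged into one kernel-verified Lean document; each statement's English description precedes it below -/
import Mathlib

section
/- Let f > 2 be an integer, let d be a divisor of f with 1 < d < f, and let χ be a primitive Dirichlet character modulo f. Then Σ_{b ∈ (ℤ/fℤ)^*} χ(b) · s(b,d) = 0, where in s(b,d) the argument b is any integer representative of the residue class (the value depends only on b modulo d). -/
open Finset Real

/-- The Dedekind sum `s(c,d) = (1/(4d)) ∑_{n=1}^{d-1} cot(πn/d) cot(πnc/d)`. -/
noncomputable def dedekindSum (c : ℤ) (d : ℕ) : ℝ :=
  (1 / (4 * (d : ℝ))) *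
    ∑ n ∈ Finset.Ioo 0 d, Real.cot (Real.pi * n / d) * Real.cot (Real.pi * n * c / d)

lemma cot_add_int_mul_pi' (x : ℝ) (n : ℤ) : Real.cot (x + n * Real.pi) = Real.cot x := by
  rw [Real.cot_eq_cos_div_sin, Real.cot_eq_cos_div_sin, Real.cos_add_int_mul_pi,
    Real.sin_add_int_mul_pi, mul_div_mul_left _ _ (zpow_ne_zero n (by norm_num : (-1:ℝ) ≠ 0))]

lemma dedekindSum_congr {c c' : ℤ} {d : ℕ} (hd : 0 < d) (h : (d : ℤ) ∣ c - c') :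
    dedekindSum c d = dedekindSum c' d := by
  obtain ⟨k, hk⟩ := h
  unfold dedekindSum
  congr 1
  refine Finset.sum_congr rfl fun n hn => ?_
  congr 1
  have hc : c = c' + k * d := by linarith [hk]
  have hd' : (d : ℝ) ≠ 0 := Nat.cast_ne_zero.2 hd.ne'
  have : Real.pi * n * c / d = Real.pi * n * c' / d + (((n : ℤ) * k : ℤ) : ℝ) * Real.pi := by
    rw [hc]; push_cast; field_simp
  rw [this, cot_add_int_mul_pi' _ ((n : ℤ) * k)]

lemma fiber_char_sum_eq_zero (f d : ℕ) [NeZero f] (hd : d ∣ f)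
    (χ : DirichletCharacter ℂ f) (h : ¬ χ.FactorsThrough d) (a : (ZMod d)ˣ) :
    ∑ b ∈ Finset.univ.filter (fun b : (ZMod f)ˣ => ZMod.unitsMap hd b = a),
      χ (b : ZMod f) = 0 := by
  rw [DirichletCharacter.factorsThrough_iff_ker_unitsMap hd, SetLike.le_def] at h
  push_neg at h
  obtain ⟨u, hu1, hu2⟩ := h
  rw [MonoidHom.mem_ker] at hu1
  have hχu : χ ((u : (ZMod f)ˣ) : ZMod f) ≠ 1 := by
    intro hc
    exact hu2 (by rw [MonoidHom.mem_ker]; exact Units.ext (by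
      rw [Units.val_one, MulChar.coe_toUnitHom]; exact hc))
  set F := Finset.univ.filter (fun b : (ZMod f)ˣ => ZMod.unitsMap hd b = a) with hF
  have key : ∑ b ∈ F, χ (((u * b : (ZMod f)ˣ)) : ZMod f) = ∑ b ∈ F, χ (b : ZMod f) := by
    refine Finset.sum_equiv (Equiv.mulLeft u) (fun b => ?_) (fun b _ => rfl)
    simp [hF, map_mul, hu1]
  have key2 : χ ((u : (ZMod f)ˣ) : ZMod f) * ∑ b ∈ F, χ (b : ZMod f)
      = ∑ b ∈ F, χ (b : ZMod f) := by
    rw [Finset.mul_sum, ← key]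
    refine Finset.sum_congr rfl fun b _ => ?_
    rw [Units.val_mul, map_mul]
  have := sub_eq_zero.2 key2
  rw [← sub_one_mul] at this
  rcases mul_eq_zero.1 this with h1 | h2
  · exact absurd (sub_eq_zero.1 h1) hχu
  · exact h2

theorem sum_primitive_char_mul_dedekindSum_eq_zero (f d : ℕ) (hf : 2 < f)
    (hd : d ∣ f) (hd1 : 1 < d) (hdf : d < f)
    (χ : DirichletCharacter ℂ f) (hprim : χ.IsPrimitive) :
    haveI : NeZero f := ⟨by omega⟩
    ∑ b : (ZMod f)ˣ, χ (b : ZMod f) * (dedekindSum ((b : ZMod f).val : ℤ) d : ℂ) = 0 := by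
  haveI : NeZero f := ⟨by omega⟩
  haveI : NeZero d := ⟨by omega⟩
  have hnft : ¬ χ.FactorsThrough d := by
    intro hft
    have : χ.conductor ≤ d := Nat.sInf_le hft
    rw [hprim] at this
    omega
  rw [← Finset.sum_fiberwise Finset.univ (ZMod.unitsMap hd)
    (fun b : (ZMod f)ˣ => χ (b : ZMod f) * (dedekindSum ((b : ZMod f).val : ℤ) d : ℂ))]
  refine Finset.sum_eq_zero fun a _ => ?_
  have hsame : ∀ b ∈ Finset.univ.filter (fun b : (ZMod f)ˣ => ZMod.unitsMap hd b = a),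
      (dedekindSum (((b : ZMod f).val : ℤ)) d : ℝ)
        = dedekindSum (((a : ZMod d).val : ℤ)) d := by
    intro b hb
    simp only [Finset.mem_filter] at hb
    refine dedekindSum_congr (by omega) ?_
    have : (((b : ZMod f).val : ℕ) : ZMod d) = (((a : ZMod d).val : ℕ) : ZMod d) := by
      have h1 : ((ZMod.unitsMap hd b : (ZMod d)ˣ) : ZMod d) = (a : ZMod d) := by
        rw [hb.2]
      rw [ZMod.natCast_val, ZMod.natCast_val, ZMod.cast_id]
      rw [ZMod.unitsMap_def] at h1
      simpa [ZMod.castHom_apply] using h1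
    have h2 := (ZMod.natCast_eq_natCast_iff _ _ _).1 this
    exact_mod_cast h2.symm.dvd
  calc ∑ b ∈ Finset.univ.filter (fun b : (ZMod f)ˣ => ZMod.unitsMap hd b = a),
        χ (b : ZMod f) * (dedekindSum ((b : ZMod f).val : ℤ) d : ℂ)
      = ∑ b ∈ Finset.univ.filter (fun b : (ZMod f)ˣ => ZMod.unitsMap hd b = a),
        χ (b : ZMod f) * (dedekindSum (((a : ZMod d).val : ℤ)) d : ℂ) := by
        refine Finset.sum_congr rfl fun b hb => ?_
        rw [hsame b hb]
    _ = (∑ b ∈ Finset.univ.filter (fun b : (ZMod f)ˣ => ZMod.unitsMap hd b = a),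
        χ (b : ZMod f)) * (dedekindSum (((a : ZMod d).val : ℤ)) d : ℂ) := by
        rw [Finset.sum_mul]
    _ = 0 := by rw [fiber_char_sum_eq_zero f d hd χ hnft a, zero_mul]
end

section
/- Let f > 2 be an integer and let b be an integer with gcd(b,f) = 1. Then Σ_{a=1, gcd(a,f)=1}^{f−1} cot(πa/f) · cot(πab/f) = 4 · Σ_{δ | f, δ < f} μ(δ) · (f/δ) · s(b, f/δ), where μ is the Möbius function and the sum on the right ranges over the divisors δ of f with f/δ > 1. -/
open Finset Real ArithmeticFunction

private noncomputable def Sfun (b : ℤ) (e : ℕ) : ℝ :=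
  ∑ a ∈ (Finset.Ioo 0 e).filter (fun a => Nat.gcd a e = 1),
    Real.cot (Real.pi * a / e) * Real.cot (Real.pi * a * b / e)

private noncomputable def Gfun (b : ℤ) (d : ℕ) : ℝ :=
  ∑ n ∈ Finset.Ioo 0 d, Real.cot (Real.pi * n / d) * Real.cot (Real.pi * n * b / d)

private lemma key (b : ℤ) : ∀ d > 0, ∑ e ∈ Nat.divisors d, Sfun b e = Gfun b d := by
  intro d hd
  rw [← Nat.sum_div_divisors d (Sfun b)]
  have hfib := Finset.sum_fiberwise_of_maps_to (s := Finset.Ioo 0 d)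
    (g := fun n => Nat.gcd n d) (t := d.divisors)
    (fun n hn => Nat.mem_divisors.mpr ⟨Nat.gcd_dvd_right n d, hd.ne'⟩)
    (fun n => Real.cot (Real.pi * n / d) * Real.cot (Real.pi * n * b / d))
  rw [Gfun, ← hfib]
  refine Finset.sum_congr rfl fun g hg => ?_
  obtain ⟨hgd, -⟩ := Nat.mem_divisors.mp hg
  have hg0 : 0 < g := Nat.pos_of_dvd_of_pos hgd hd
  rw [Sfun]
  refine Finset.sum_nbij' (fun m => m * g) (fun n => n / g) ?_ ?_ ?_ ?_ ?_
  · intro m hm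
    simp only [Finset.mem_filter, Finset.mem_Ioo] at hm ⊢
    obtain ⟨⟨hm0, hmd⟩, hgcd⟩ := hm
    refine ⟨⟨Nat.mul_pos hm0 hg0, ?_⟩, ?_⟩
    · calc m * g < (d / g) * g := Nat.mul_lt_mul_of_lt_of_le hmd le_rfl hg0
        _ = d := Nat.div_mul_cancel hgd
    · have h : Nat.gcd (m * g) (d / g * g) = g := by
        rw [Nat.gcd_mul_right, hgcd, one_mul]
      rwa [Nat.div_mul_cancel hgd] at h
  · intro n hn
    simp only [Finset.mem_filter, Finset.mem_Ioo] at hn ⊢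
    obtain ⟨⟨hn0, hnd⟩, hgcd⟩ := hn
    have hgn : g ∣ n := hgcd ▸ Nat.gcd_dvd_left n d
    refine ⟨⟨Nat.div_pos (Nat.le_of_dvd hn0 hgn) hg0,
      Nat.div_lt_div_of_lt_of_dvd hgd hnd⟩, ?_⟩
    have h := Nat.coprime_div_gcd_div_gcd (m := n) (n := d) (by rw [hgcd]; exact hg0)
    rwa [hgcd] at h
  · intro m hm
    show m * g / g = m
    exact Nat.mul_div_cancel m hg0
  · intro n hn
    simp only [Finset.mem_filter, Finset.mem_Ioo] at hn
    exact Nat.div_mul_cancel (hn.2 ▸ Nat.gcd_dvd_left n d)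
  · intro m hm
    simp only [Finset.mem_filter, Finset.mem_Ioo] at hm
    have hd2 : (d : ℝ) = ((d / g : ℕ) : ℝ) * g := by
      rw [← Nat.cast_mul, Nat.div_mul_cancel hgd]
    have hdg0 : ((d / g : ℕ) : ℝ) ≠ 0 := by
      have := Nat.div_pos (Nat.le_of_dvd hd hgd) hg0
      positivity
    have hgr : (g : ℝ) ≠ 0 := by positivity
    congr 2
    · rw [hd2]; push_cast; field_simp
    · rw [hd2]; push_cast; field_simp

theorem sum_cot_mul_cot_eq_sum_moebius_dedekindSum (f : ℕ) (hf : 2 < f)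
    (b : ℤ) (hb : Int.gcd b f = 1) :
    ∑ a ∈ (Finset.Ioo 0 f).filter (fun a => Nat.gcd a f = 1),
        Real.cot (Real.pi * a / f) * Real.cot (Real.pi * a * b / f) =
      4 * ∑ δ ∈ f.divisors.filter (fun δ => δ < f),
        (moebius δ : ℝ) * ((f / δ : ℕ) : ℝ) * dedekindSum b (f / δ) := by
  have hf0 : 0 < f := by omega
  have hinv := (ArithmeticFunction.sum_eq_iff_sum_smul_moebius_eq
    (f := Sfun b) (g := Gfun b)).mp (key b) f hf0
  have hG : ∀ e : ℕ, Gfun b e = 4 * e * dedekindSum b e := by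
    intro e
    rcases Nat.eq_zero_or_pos e with he | he
    · simp [he, Gfun, dedekindSum]
    · rw [dedekindSum, ← Gfun]
      have : (4 * (e : ℝ)) ≠ 0 := by positivity
      field_simp
  calc ∑ a ∈ (Finset.Ioo 0 f).filter (fun a => Nat.gcd a f = 1),
        Real.cot (Real.pi * a / f) * Real.cot (Real.pi * a * b / f)
      = Sfun b f := rfl
    _ = ∑ x ∈ f.divisorsAntidiagonal, (moebius x.1) • Gfun b x.2 := hinv.symm
    _ = ∑ δ ∈ f.divisors, (moebius δ) • Gfun b (f / δ) :=
        Nat.sum_divisorsAntidiagonal (fun i j => (moebius i) • Gfun b j)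
    _ = ∑ δ ∈ f.divisors.filter (fun δ => δ < f), (moebius δ) • Gfun b (f / δ) := by
        refine (Finset.sum_subset (Finset.filter_subset _ _) ?_).symm
        intro δ hδ hδ'
        simp only [Finset.mem_filter, hδ, true_and, not_lt] at hδ'
        have hδf : δ = f := le_antisymm (Nat.le_of_dvd hf0 (Nat.mem_divisors.mp hδ).1)
          (by omega)
        have : f / δ = 1 := by rw [hδf, Nat.div_self hf0]
        have he : Finset.Ioo 0 1 = (∅ : Finset ℕ) := rfl
        rw [this]
        simp [Gfun, he]
    _ = 4 * ∑ δ ∈ f.divisors.filter (fun δ => δ < f),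
        (moebius δ : ℝ) * ((f / δ : ℕ) : ℝ) * dedekindSum b (f / δ) := by
        rw [Finset.mul_sum]
        refine Finset.sum_congr rfl fun δ hδ => ?_
        rw [zsmul_eq_mul, hG]
        ring
end
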